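/- Let M ∈ ℂ^{n×d} be rank-one and let M̂ be the best rank-one approximation (in Frobenius norm) of M + Δ. Then the sine of the angle between the ranges of M and M̂, and likewise between the ranges of M* and M̂*, is bounded by max(‖P_{R(M)}Δ‖, ‖ΔP_{R(M*)}‖)/(‖M‖ − ‖M + Δ − M̂‖), provided the denominator is positive. -/

import Mathlib

open scoped Matrix

/-- Frobenius norm of a complex matrix. -/
noncomputable def frob {n d : ℕ} (M : Matrix (Fin n) (Fin d) ℂ) : ℝ :=
  Real.sqrt (∑ i, ∑ j, ‖M i j‖ ^ 2)

/-- Spectral norm of a complex matrix. -/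
noncomputable def specNorm {n d : ℕ} (M : Matrix (Fin n) (Fin d) ℂ) : ℝ :=
  ‖LinearMap.toContinuousLinearMap (Matrix.toEuclideanLin M)‖

/-- The orthogonal projection onto a subspace, as a map of the ambient space. -/
noncomputable def projCLM {n : ℕ} (S : Submodule ℂ (EuclideanSpace ℂ (Fin n))) :
    EuclideanSpace ℂ (Fin n) →L[ℂ] EuclideanSpace ℂ (Fin n) :=
  S.subtypeL.comp (S.orthogonalProjectionOnto)

/-- The orthogonal projection onto a subspace, as a matrix. -/
noncomputable def projMatrix {n : ℕ} (S : Submodule ℂ (EuclideanSpace ℂ (Fin n))) :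
    Matrix (Fin n) (Fin n) ℂ :=
  Matrix.toEuclideanLin.symm (projCLM S).toLinearMap

/-- `sin` of the angle between two subspaces: `sin θ(S, T) = ‖P_{S^⊥} P_T‖`. -/
noncomputable def sinTheta {n : ℕ} (S T : Submodule ℂ (EuclideanSpace ℂ (Fin n))) : ℝ :=
  ‖(projCLM Sᗮ).comp (projCLM T)‖

/-- Range (column space) of a matrix. -/
noncomputable def ran {n d : ℕ} (M : Matrix (Fin n) (Fin d) ℂ) :
    Submodule ℂ (EuclideanSpace ℂ (Fin n)) :=
  LinearMap.range (Matrix.toEuclideanLin M)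

/-!
Let `E = M + Δ - M̂` and let `T, T'` be the ranges of `M̂, M̂*`. Optimality of `M̂` forces
`P_T E = 0` and `E P_{T'} = 0`: `P_T (M + Δ)` also has rank at most one, and by Pythagoras its
squared Frobenius distance to `M + Δ` is `‖E‖_F² - ‖P_T E‖_F²`. Consequently
`P_{T^⊥} M = E P_{T'^⊥} P_{R(M*)} - P_{T^⊥} Δ P_{R(M*)}`, so
`‖P_{T^⊥} M‖ ≤ ‖E‖ ‖P_{T'^⊥} P_{R(M*)}‖ + ‖Δ P_{R(M*)}‖`, and taking adjoints gives the mirror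
inequality. For rank-one `M` one has `‖P_{T^⊥} M‖ = ‖M‖ ‖P_{T^⊥} P_{R(M)}‖`, and for two lines
`‖P_{S^⊥} P_T‖ = ‖P_{T^⊥} P_S‖`. Writing `s₁, s₂` for the two sines, the inequalities become
`‖M‖ s₁ ≤ ‖E‖ s₂ + ‖Δ P_{R(M*)}‖` and `‖M‖ s₂ ≤ ‖E‖ s₁ + ‖P_{R(M)} Δ‖`; evaluating at the larger
of `s₁, s₂` gives the bound. If `M̂ = 0`, both sines vanish.
-/

open scoped InnerProductSpace InnerProduct ComplexOrder
open ContinuousLinearMap Module InnerProductSpace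

theorem max_mul_sub_le_max {σ e s₁ s₂ N₁ N₂ : ℝ} (he : 0 ≤ e) (h₁ : σ * s₁ ≤ e * s₂ + N₂)
    (h₂ : σ * s₂ ≤ e * s₁ + N₁) : max s₁ s₂ * (σ - e) ≤ max N₁ N₂ := by
  rcases le_total s₁ s₂ with h | h
  · rw [max_eq_right h]
    nlinarith [mul_le_mul_of_nonneg_left h he, le_max_left N₁ N₂]
  · rw [max_eq_left h]
    nlinarith [mul_le_mul_of_nonneg_left h he, le_max_right N₁ N₂]

section Operators

variable {𝕜 E F G : Type*} [RCLike 𝕜]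
  [NormedAddCommGroup E] [InnerProductSpace 𝕜 E]
  [NormedAddCommGroup F] [InnerProductSpace 𝕜 F]
  [NormedAddCommGroup G] [InnerProductSpace 𝕜 G]

theorem Submodule.exists_norm_eq_one_and_eq_span_singleton {S : Submodule 𝕜 E}
    (hS : finrank 𝕜 S = 1) : ∃ u : E, ‖u‖ = 1 ∧ S = 𝕜 ∙ u := by
  have hS_ne : S ≠ ⊥ := by
    rintro rfl
    simp at hS
  obtain ⟨w, hwS, hw⟩ := S.ne_bot_iff.mp hS_ne
  exact ⟨(‖w‖⁻¹ : 𝕜) • w, norm_smul_inv_norm hw,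
    eq_span_singleton_of_mem_of_finrank_eq_one hS (S.smul_mem _ hwS)
      (smul_ne_zero (by simpa using hw) hw)⟩

theorem norm_starProjection_orthogonal_span_singleton_comm {u w : E} (hu : ‖u‖ = 1)
    (hw : ‖w‖ = 1) : ‖(𝕜 ∙ u)ᗮ.starProjection w‖ = ‖(𝕜 ∙ w)ᗮ.starProjection u‖ := by
  have h_sq : ∀ {x y : E}, ‖x‖ = 1 → ‖y‖ = 1 →
      ‖(𝕜 ∙ x)ᗮ.starProjection y‖ ^ 2 = 1 - ‖⟪x, y⟫_𝕜‖ ^ 2 := fun {x y} hx hy => by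
    rw [eq_sub_iff_add_eq', ← one_pow 2, ← hy,
      Submodule.norm_sq_eq_add_norm_sq_starProjection y (𝕜 ∙ x),
      Submodule.starProjection_unit_singleton 𝕜 hx, norm_smul, hx, mul_one]
  rw [← sq_eq_sq₀ (norm_nonneg _) (norm_nonneg _), h_sq hu hw, h_sq hw hu, norm_inner_symm]

theorem ContinuousLinearMap.starProjection_orthogonal_range_comp_self [FiniteDimensional 𝕜 F]
    (A : E →L[𝕜] F) : A.rangeᗮ.starProjection ∘L A = 0 := by
  ext1 x
  exact Submodule.starProjection_orthogonal_apply_eq_zero ⟨x, rfl⟩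

variable [CompleteSpace E] [CompleteSpace F]

theorem ContinuousLinearMap.eq_rankOne_of_range_le_span_singleton {u : F} (hu : ‖u‖ = 1)
    {A : E →L[𝕜] F} (hA : A.range ≤ 𝕜 ∙ u) : A = rankOne 𝕜 u ((A†) u) := by
  ext1 x
  rw [rankOne_apply, adjoint_inner_left, ← Submodule.starProjection_unit_singleton 𝕜 hu]
  exact (Submodule.starProjection_eq_self_iff.mpr (hA ⟨x, rfl⟩)).symm

theorem ContinuousLinearMap.norm_comp_of_range_le_span_singleton {u : F} (hu : ‖u‖ = 1)
    {A : E →L[𝕜] F} (hA : A.range ≤ 𝕜 ∙ u) (X : F →L[𝕜] G) : ‖X ∘L A‖ = ‖X u‖ * ‖A‖ := by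
  rw [eq_rankOne_of_range_le_span_singleton hu hA, comp_rankOne, norm_rankOne, norm_rankOne, hu,
    one_mul]

theorem ContinuousLinearMap.norm_comp_starProjection_span_singleton {u : E} (hu : ‖u‖ = 1)
    (X : E →L[𝕜] G) : ‖X ∘L (𝕜 ∙ u).starProjection‖ = ‖X u‖ := by
  have hne : (𝕜 ∙ u) ≠ ⊥ := by simp [← norm_ne_zero_iff, hu]
  rw [norm_comp_of_range_le_span_singleton hu (Submodule.range_starProjection _).le,
    Submodule.norm_starProjection _ hne, mul_one]

theorem norm_starProjection_orthogonal_comp_starProjection_comm {S T : Submodule 𝕜 E}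
    [S.HasOrthogonalProjection] [T.HasOrthogonalProjection] (hS : finrank 𝕜 S = 1)
    (hT : finrank 𝕜 T = 1) :
    ‖Sᗮ.starProjection ∘L T.starProjection‖ = ‖Tᗮ.starProjection ∘L S.starProjection‖ := by
  obtain ⟨u, hu, rfl⟩ := S.exists_norm_eq_one_and_eq_span_singleton hS
  obtain ⟨w, hw, rfl⟩ := T.exists_norm_eq_one_and_eq_span_singleton hT
  rw [norm_comp_starProjection_span_singleton hw, norm_comp_starProjection_span_singleton hu,
    norm_starProjection_orthogonal_span_singleton_comm hu hw]

theorem ContinuousLinearMap.norm_comp_of_range_le_of_finrank_eq_one {S : Submodule 𝕜 F}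
    [S.HasOrthogonalProjection] (hS : finrank 𝕜 S = 1) {A : E →L[𝕜] F} (hA : A.range ≤ S)
    (X : F →L[𝕜] G) :
    ‖X ∘L A‖ = ‖X ∘L S.starProjection‖ * ‖A‖ := by
  obtain ⟨u, hu, rfl⟩ := S.exists_norm_eq_one_and_eq_span_singleton hS
  rw [norm_comp_of_range_le_span_singleton hu hA, norm_comp_starProjection_span_singleton hu]

theorem ContinuousLinearMap.comp_starProjection_range_adjoint [FiniteDimensional 𝕜 E]
    (A : E →L[𝕜] F) : A ∘L (A†).range.starProjection = A := by
  ext1 x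
  have hker : x - (A†).range.starProjection x ∈ A.ker := by
    have h := orthogonal_range (A†)
    rw [adjoint_adjoint] at h
    rw [← h]
    exact Submodule.sub_starProjection_mem_orthogonal x
  rw [LinearMap.mem_ker, coe_coe, map_sub, sub_eq_zero] at hker
  exact hker.symm

theorem ContinuousLinearMap.finrank_range_adjoint [FiniteDimensional 𝕜 E]
    [FiniteDimensional 𝕜 F] (A : E →L[𝕜] F) : finrank 𝕜 (A†).range = finrank 𝕜 A.range :=
  LinearMap.finrank_range_adjoint (A : E →ₗ[𝕜] F)

theorem norm_starProjection_orthogonal_range_comp_le [FiniteDimensional 𝕜 E]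
    [FiniteDimensional 𝕜 F] {A Ahat D : E →L[𝕜] F}
    (hleft : Ahat.range.starProjection ∘L (A + D - Ahat) = 0)
    (hright : (A + D - Ahat) ∘L (Ahat†).range.starProjection = 0) :
    ‖Ahat.rangeᗮ.starProjection ∘L A‖ ≤ ‖A + D - Ahat‖ *
        ‖(Ahat†).rangeᗮ.starProjection ∘L (A†).range.starProjection‖ +
      ‖D ∘L (A†).range.starProjection‖ := by
  set R := (A†).range.starProjection
  have hresid_left : Ahat.rangeᗮ.starProjection ∘L (A + D - Ahat) = A + D - Ahat := by
    rw [Submodule.starProjection_orthogonal, sub_comp, hleft, id_comp, sub_zero]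
  have hresid_right : (A + D - Ahat) ∘L (Ahat†).rangeᗮ.starProjection = A + D - Ahat := by
    rw [Submodule.starProjection_orthogonal, comp_sub, hright, comp_id, sub_zero]
  have hsplit : Ahat.rangeᗮ.starProjection ∘L A =
      (A + D - Ahat) - Ahat.rangeᗮ.starProjection ∘L D := by
    calc Ahat.rangeᗮ.starProjection ∘L A
        = Ahat.rangeᗮ.starProjection ∘L ((A + D - Ahat) - D + Ahat) := by
          congr 1
          abel
      _ = _ := by
          rw [comp_add, comp_sub, hresid_left, starProjection_orthogonal_range_comp_self, add_zero]
  have key : Ahat.rangeᗮ.starProjection ∘L A =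
      (A + D - Ahat) ∘L ((Ahat†).rangeᗮ.starProjection ∘L R) -
        Ahat.rangeᗮ.starProjection ∘L (D ∘L R) := by
    calc Ahat.rangeᗮ.starProjection ∘L A = (Ahat.rangeᗮ.starProjection ∘L A) ∘L R := by
          rw [comp_assoc, comp_starProjection_range_adjoint]
      _ = _ := by rw [hsplit, sub_comp, ← comp_assoc, hresid_right, comp_assoc]
  rw [key]
  calc _ ≤ ‖A + D - Ahat‖ * ‖(Ahat†).rangeᗮ.starProjection ∘L R‖ +
        ‖Ahat.rangeᗮ.starProjection‖ * ‖D ∘L R‖ :=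
        (norm_sub_le _ _).trans (add_le_add (opNorm_comp_le _ _) (opNorm_comp_le _ _))
    _ ≤ _ := by
      gcongr
      exact mul_le_of_le_one_left (norm_nonneg _) (Submodule.starProjection_norm_le _)

variable [FiniteDimensional 𝕜 E] [FiniteDimensional 𝕜 F]

theorem norm_mul_norm_starProjection_orthogonal_comp_le {A Ahat D : E →L[𝕜] F}
    (hA : finrank 𝕜 A.range = 1) (hAhat : finrank 𝕜 Ahat.range = 1)
    (hleft : Ahat.range.starProjection ∘L (A + D - Ahat) = 0)
    (hright : (A + D - Ahat) ∘L (Ahat†).range.starProjection = 0) :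
    ‖A‖ * ‖A.rangeᗮ.starProjection ∘L Ahat.range.starProjection‖ ≤ ‖A + D - Ahat‖ *
        ‖(A†).rangeᗮ.starProjection ∘L (Ahat†).range.starProjection‖ +
      ‖D ∘L (A†).range.starProjection‖ := by
  have hA' := (finrank_range_adjoint A).trans hA
  have hAhat' := (finrank_range_adjoint Ahat).trans hAhat
  rw [norm_starProjection_orthogonal_comp_starProjection_comm hA hAhat,
    norm_starProjection_orthogonal_comp_starProjection_comm hA' hAhat', mul_comm,
    ← norm_comp_of_range_le_of_finrank_eq_one hA le_rfl]
  exact norm_starProjection_orthogonal_range_comp_le hleft hright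

theorem wedin_rank_one_of_orthogonality {A Ahat D : E →L[𝕜] F}
    (hA : finrank 𝕜 A.range = 1) (hAhat : finrank 𝕜 Ahat.range ≤ 1)
    (hleft : Ahat.range.starProjection ∘L (A + D - Ahat) = 0)
    (hright : (A + D - Ahat) ∘L (Ahat†).range.starProjection = 0)
    (hden : 0 < ‖A‖ - ‖A + D - Ahat‖) :
    max ‖A.rangeᗮ.starProjection ∘L Ahat.range.starProjection‖
        ‖(A†).rangeᗮ.starProjection ∘L (Ahat†).range.starProjection‖ ≤
      max ‖A.range.starProjection ∘L D‖ ‖D ∘L (A†).range.starProjection‖ /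
        (‖A‖ - ‖A + D - Ahat‖) := by
  rcases eq_or_ne Ahat 0 with rfl | hAhat_ne
  · simp only [map_zero, ContinuousLinearMap.toLinearMap_zero, LinearMap.range_zero,
      Submodule.starProjection_bot, comp_zero, norm_zero, max_self]
    exact div_nonneg (le_max_of_le_left (norm_nonneg _)) hden.le
  have hAhat1 : finrank 𝕜 Ahat.range = 1 := by
    refine le_antisymm hAhat (Nat.one_le_iff_ne_zero.mpr fun h => hAhat_ne ?_)
    exact coe_injective (LinearMap.range_eq_bot.mp (Submodule.finrank_eq_zero.mp h))
  have hleft' : (Ahat†).range.starProjection ∘L (A† + D† - Ahat†) = 0 := by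
    have h := congrArg adjoint hright
    rwa [adjoint_comp, (isSelfAdjoint_starProjection _).adjoint_eq, map_sub, map_add,
      map_zero] at h
  have hright' : (A† + D† - Ahat†) ∘L Ahat.range.starProjection = 0 := by
    have h := congrArg adjoint hleft
    rwa [adjoint_comp, (isSelfAdjoint_starProjection _).adjoint_eq, map_sub, map_add,
      map_zero] at h
  have h₁ := norm_mul_norm_starProjection_orthogonal_comp_le hA hAhat1 hleft hright
  have h₂ := norm_mul_norm_starProjection_orthogonal_comp_le ((finrank_range_adjoint A).trans hA)
    ((finrank_range_adjoint Ahat).trans hAhat1) hleft' (by rwa [adjoint_adjoint])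
  have hD : ‖D† ∘L A.range.starProjection‖ = ‖A.range.starProjection ∘L D‖ := by
    rw [← adjoint.norm_map, adjoint_comp, adjoint_adjoint,
      (isSelfAdjoint_starProjection _).adjoint_eq]
  rw [adjoint_adjoint, adjoint_adjoint, ← map_add, ← map_sub, adjoint.norm_map, adjoint.norm_map,
    hD] at h₂
  rw [le_div_iff₀ hden]
  exact max_mul_sub_le_max (norm_nonneg _) h₁ h₂

end Operators

namespace Matrix

variable {𝕜 : Type*} [RCLike 𝕜] {l m n : Type*} [Fintype l] [Fintype m] [Fintype n]
  [DecidableEq n]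

noncomputable def toEuclideanCLMₗ :
    Matrix m n 𝕜 ≃ₗ[𝕜] (EuclideanSpace 𝕜 n →L[𝕜] EuclideanSpace 𝕜 m) :=
  toEuclideanLin.trans LinearMap.toContinuousLinearMap

theorem toEuclideanCLMₗ_apply (A : Matrix m n 𝕜) (x : EuclideanSpace 𝕜 n) :
    toEuclideanCLMₗ A x = toEuclideanLin A x := rfl

theorem toEuclideanCLMₗ_single_apply (A : Matrix m n 𝕜) (j : n) (i : m) :
    toEuclideanCLMₗ A (EuclideanSpace.single j 1) i = A i j := by
  simp [toEuclideanCLMₗ_apply]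

theorem toEuclideanCLMₗ_mul [DecidableEq m] (A : Matrix l m 𝕜) (B : Matrix m n 𝕜) :
    toEuclideanCLMₗ (A * B) = toEuclideanCLMₗ A ∘L toEuclideanCLMₗ B := by
  ext1 x
  simp [toEuclideanCLMₗ_apply]

theorem toEuclideanCLMₗ_conjTranspose [DecidableEq m] (A : Matrix m n 𝕜) :
    toEuclideanCLMₗ Aᴴ = (toEuclideanCLMₗ A)† := by
  rw [toEuclideanCLMₗ, LinearEquiv.trans_apply, toEuclideanLin_conjTranspose_eq_adjoint,
    LinearMap.adjoint_toContinuousLinearMap]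
  rfl

theorem rank_eq_finrank_range_toEuclideanCLMₗ (A : Matrix m n 𝕜) :
    A.rank = finrank 𝕜 (toEuclideanCLMₗ A).range :=
  A.rank_eq_finrank_range_toLin (EuclideanSpace.basisFun m 𝕜).toBasis
    (EuclideanSpace.basisFun n 𝕜).toBasis

end Matrix

open Matrix

section

variable {n d : ℕ}

theorem specNorm_eq_norm_toEuclideanCLMₗ (M : Matrix (Fin n) (Fin d) ℂ) :
    specNorm M = ‖toEuclideanCLMₗ M‖ := rfl

theorem sinTheta_eq_norm_starProjection_comp (S T : Submodule ℂ (EuclideanSpace ℂ (Fin n))) :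
    sinTheta S T = ‖Sᗮ.starProjection ∘L T.starProjection‖ := rfl

theorem ran_eq_range_toEuclideanCLMₗ (M : Matrix (Fin n) (Fin d) ℂ) :
    ran M = (toEuclideanCLMₗ M).range := rfl

theorem toEuclideanCLMₗ_projMatrix (S : Submodule ℂ (EuclideanSpace ℂ (Fin n))) :
    toEuclideanCLMₗ (projMatrix S) = S.starProjection := by
  rw [projMatrix, toEuclideanCLMₗ, LinearEquiv.trans_apply, LinearEquiv.apply_symm_apply]
  rfl

section FrobeniusNorm

attribute [local instance] Matrix.frobeniusNormedAddCommGroup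

theorem frob_eq_norm (M : Matrix (Fin n) (Fin d) ℂ) : frob M = ‖M‖ := by
  rw [frob, frobenius_norm_def, Real.sqrt_eq_rpow]
  simp

theorem frob_conjTranspose (M : Matrix (Fin n) (Fin d) ℂ) : frob Mᴴ = frob M := by
  rw [frob_eq_norm, frob_eq_norm, frobenius_norm_conjTranspose]

theorem frob_eq_zero {M : Matrix (Fin n) (Fin d) ℂ} : frob M = 0 ↔ M = 0 := by
  rw [frob_eq_norm, norm_eq_zero]

end FrobeniusNorm

theorem frob_sq_eq_sum_norm_sq_col (M : Matrix (Fin n) (Fin d) ℂ) :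
    frob M ^ 2 = ∑ j, ‖toEuclideanCLMₗ M (EuclideanSpace.single j 1)‖ ^ 2 := by
  rw [frob, Real.sq_sqrt (by positivity), Finset.sum_comm]
  simp_rw [EuclideanSpace.norm_sq_eq, toEuclideanCLMₗ_single_apply]

theorem frob_sq_eq_frob_sq_projMatrix_mul_add (S : Submodule ℂ (EuclideanSpace ℂ (Fin n)))
    (M : Matrix (Fin n) (Fin d) ℂ) :
    frob M ^ 2 = frob (projMatrix S * M) ^ 2 + frob (M - projMatrix S * M) ^ 2 := by
  simp_rw [frob_sq_eq_sum_norm_sq_col, ← Finset.sum_add_distrib, map_sub, toEuclideanCLMₗ_mul,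
    toEuclideanCLMₗ_projMatrix, _root_.sub_apply, ContinuousLinearMap.comp_apply,
    ← Submodule.starProjection_orthogonal_val]
  exact Finset.sum_congr rfl fun j _ => Submodule.norm_sq_eq_add_norm_sq_starProjection _ S

def IsBestRankApprox (k : ℕ) (A B : Matrix (Fin n) (Fin d) ℂ) : Prop :=
  B.rank ≤ k ∧ ∀ Z : Matrix (Fin n) (Fin d) ℂ, Z.rank ≤ k → frob (A - B) ≤ frob (A - Z)

namespace IsBestRankApprox

variable {k : ℕ} {A B : Matrix (Fin n) (Fin d) ℂ}

theorem conjTranspose (h : IsBestRankApprox k A B) : IsBestRankApprox k Aᴴ Bᴴ := by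
  refine ⟨(rank_conjTranspose B).trans_le h.1, fun Z hZ => ?_⟩
  have hbest := h.2 Zᴴ ((rank_conjTranspose Z).trans_le hZ)
  rwa [← frob_conjTranspose (A - B), ← frob_conjTranspose (A - Zᴴ), conjTranspose_sub,
    conjTranspose_sub, conjTranspose_conjTranspose] at hbest

theorem starProjection_ran_comp_sub (h : IsBestRankApprox k A B) :
    (ran B).starProjection ∘L toEuclideanCLMₗ (A - B) = 0 := by
  have hPB : projMatrix (ran B) * B = B := by
    refine toEuclideanCLMₗ.injective (ext fun x => ?_)
    rw [toEuclideanCLMₗ_mul, toEuclideanCLMₗ_projMatrix, ContinuousLinearMap.comp_apply]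
    exact Submodule.starProjection_eq_self_iff.mpr ⟨x, rfl⟩
  have hrank : (projMatrix (ran B) * A).rank ≤ k := by
    refine le_trans ?_ h.1
    rw [rank_eq_finrank_range_toEuclideanCLMₗ, rank_eq_finrank_range_toEuclideanCLMₗ,
      toEuclideanCLMₗ_mul, toEuclideanCLMₗ_projMatrix]
    refine Submodule.finrank_mono ((LinearMap.range_comp_le_range _ _).trans ?_)
    rw [Submodule.range_starProjection]
    rfl
  have hpyth := frob_sq_eq_frob_sq_projMatrix_mul_add (ran B) (A - B)
  have hresid : A - B - projMatrix (ran B) * (A - B) = A - projMatrix (ran B) * A := by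
    rw [Matrix.mul_sub, hPB, sub_sub_sub_cancel_right]
  rw [hresid] at hpyth
  have hle : frob (A - B) ^ 2 ≤ frob (A - projMatrix (ran B) * A) ^ 2 :=
    pow_le_pow_left₀ (Real.sqrt_nonneg _) (h.2 _ hrank) 2
  have hzero : projMatrix (ran B) * (A - B) = 0 := by
    rw [← frob_eq_zero, ← sq_eq_zero_iff]
    nlinarith [sq_nonneg (frob (projMatrix (ran B) * (A - B)))]
  rw [← toEuclideanCLMₗ_projMatrix, ← toEuclideanCLMₗ_mul, hzero, map_zero]

theorem sub_comp_starProjection_ran_conjTranspose (h : IsBestRankApprox k A B) :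
    toEuclideanCLMₗ (A - B) ∘L (ran Bᴴ).starProjection = 0 := by
  have h' := congrArg adjoint h.conjTranspose.starProjection_ran_comp_sub
  rwa [← conjTranspose_sub, toEuclideanCLMₗ_conjTranspose, adjoint_comp, adjoint_adjoint,
    (isSelfAdjoint_starProjection _).adjoint_eq, map_zero] at h'

end IsBestRankApprox

end

/-- Wedin's non-Hermitian `sin θ` theorem, rank-one case: if `M` is rank-one and `M̂` is
a best rank-one Frobenius approximation of `M + Δ`, then the sines of the angles between
the ranges of `M, M̂` and of `M*, M̂*` are bounded by
`max(‖P_{R(M)}Δ‖, ‖ΔP_{R(M*)}‖)/(‖M‖ − ‖M + Δ − M̂‖)`, provided the denominator is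
positive. -/
theorem wedin_sin_theta_rank_one {n d : ℕ} (M Mhat Δ : Matrix (Fin n) (Fin d) ℂ)
    (hM : M.rank = 1) (hMhat : Mhat.rank ≤ 1)
    (hbest : ∀ Z : Matrix (Fin n) (Fin d) ℂ, Z.rank ≤ 1 →
      frob (M + Δ - Mhat) ≤ frob (M + Δ - Z))
    (hden : 0 < specNorm M - specNorm (M + Δ - Mhat)) :
    max (sinTheta (ran M) (ran Mhat)) (sinTheta (ran Mᴴ) (ran Mhatᴴ))
      ≤ max (specNorm (projMatrix (ran M) * Δ)) (specNorm (Δ * projMatrix (ran Mᴴ)))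
        / (specNorm M - specNorm (M + Δ - Mhat)) := by
  have hopt : IsBestRankApprox 1 (M + Δ) Mhat := ⟨hMhat, hbest⟩
  have hleft := hopt.starProjection_ran_comp_sub
  have hright := hopt.sub_comp_starProjection_ran_conjTranspose
  rw [rank_eq_finrank_range_toEuclideanCLMₗ] at hM hMhat
  simp only [ran_eq_range_toEuclideanCLMₗ, toEuclideanCLMₗ_conjTranspose,
    sinTheta_eq_norm_starProjection_comp, specNorm_eq_norm_toEuclideanCLMₗ, toEuclideanCLMₗ_mul,
    toEuclideanCLMₗ_projMatrix, map_sub, map_add] at hleft hright hden ⊢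
  exact wedin_rank_one_of_orthogonality hM hMhat hleft hright hden
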